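/- arXiv:1010.3407 — 16 statements merged into one kernel-verified Lean document; each statement's English description precedes it below -/
import Mathlib

section
/- A right Hom-alternative algebra is Hom-alternative (i.e., also satisfies $as(x,x,y)=0$) if and only if it is Hom-flexible (i.e., $as(x,y,x)=0$ for all $x,y$). -/
theorem stmt2 {K : Type*} [Field K] [CharZero K] {A : Type*} [AddCommGroup A] [Module K A]
    (mul : A →ₗ[K] A →ₗ[K] A) (α : A →ₗ[K] A)
    (hra : ∀ x y : A, mul (mul x y) (α y) - mul (α x) (mul y y) = 0) :
    (∀ x y : A, mul (mul x x) (α y) - mul (α x) (mul x y) = 0) ↔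
    (∀ x y : A, mul (mul x y) (α x) - mul (α x) (mul y x) = 0) := by
  have key : ∀ x y z : A,
      (mul (mul x y) (α z) - mul (α x) (mul y z)) +
      (mul (mul x z) (α y) - mul (α x) (mul z y)) = 0 := by
    intro x y z
    have h := hra x (y + z)
    have h1 := hra x y
    have h2 := hra x z
    simp only [map_add, LinearMap.add_apply] at h
    -- rearrange: h = h1 + h2 + goal (up to abel)
    have hg : (mul (mul x y) (α z) - mul (α x) (mul y z)) +
        (mul (mul x z) (α y) - mul (α x) (mul z y)) =
        (mul (mul x y) (α y) + mul (mul x y) (α z) + (mul (mul x z) (α y) + mul (mul x z) (α z)) -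
          (mul (α x) (mul y y) + mul (α x) (mul y z) + (mul (α x) (mul z y) + mul (α x) (mul z z))))
        - (mul (mul x y) (α y) - mul (α x) (mul y y))
        - (mul (mul x z) (α z) - mul (α x) (mul z z)) := by abel
    rw [hg, h1, h2, sub_zero, sub_zero]
    abel_nf at h ⊢
    exact h
  constructor
  · intro hl x y
    have k := key x y x
    rw [hl x y, add_zero] at k
    exact k
  · intro hf x y
    have k := key x x y
    rw [hf x y, add_zero] at k
    exact k
end

section
/- Let $(A,\mu,\alpha)$ be a right Hom-alternative algebra and $\beta: A \to A$ a linear map satisfying $\beta(xy) = \beta(x)\beta(y)$ for all $x,y$. Then the Hom-algebra $A_\beta = (A, \beta \circ \mu, \beta \circ \alpha)$ is also right Hom-alternative. -/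
theorem stmt3 {K : Type*} [Field K] [CharZero K] {A : Type*} [AddCommGroup A] [Module K A]
    (mul : A →ₗ[K] A →ₗ[K] A) (α : A →ₗ[K] A)
    (hra : ∀ x y : A, mul (mul x y) (α y) - mul (α x) (mul y y) = 0)
    (β : A →ₗ[K] A) (hβ : ∀ x y : A, β (mul x y) = mul (β x) (β y)) :
    ∀ x y : A,
      β (mul (β (mul x y)) (β (α y))) - β (mul (β (α x)) (β (mul y y))) = 0 := by
  intro x y
  rw [← hβ, ← hβ, ← map_sub, ← map_sub, hra, map_zero, map_zero]
end

section
/- Let $(A,\mu,\alpha)$ be a multiplicative right Hom-alternative algebra (i.e., $\alpha(xy)=\alpha(x)\alpha(y)$) and let $\beta: A \to A$ satisfy $\beta(xy)=\beta(x)\beta(y)$ and $\beta\alpha = \alpha\beta$. Then $A_\beta = (A, \beta\mu, \beta\alpha)$ is a multiplicative right Hom-alternative algebra, i.e., $(\beta\alpha)(\beta\mu(x,y)) = \beta\mu(\beta\alpha(x), \beta\alpha(y))$ for all $x,y$ and $as_{A_\beta}(x,y,y)=0$. -/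
theorem stmt4 {K : Type*} [Field K] [CharZero K] {A : Type*} [AddCommGroup A] [Module K A]
    (mul : A →ₗ[K] A →ₗ[K] A) (α : A →ₗ[K] A)
    (hα : ∀ x y : A, α (mul x y) = mul (α x) (α y))
    (hra : ∀ x y : A, mul (mul x y) (α y) - mul (α x) (mul y y) = 0)
    (β : A →ₗ[K] A) (hβ : ∀ x y : A, β (mul x y) = mul (β x) (β y))
    (hcomm : ∀ x : A, β (α x) = α (β x)) :
    (∀ x y : A, β (α (β (mul x y))) = β (mul (β (α x)) (β (α y)))) ∧
    (∀ x y : A,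
      β (mul (β (mul x y)) (β (α y))) - β (mul (β (α x)) (β (mul y y))) = 0) := by
  constructor
  · intro x y
    rw [← hβ, ← hα, ← hcomm]
  · intro x y
    rw [← hβ, ← hβ, ← map_sub, ← map_sub, hra, map_zero, map_zero]
end

section
/- Let $(A,\mu,\alpha)$ be a multiplicative right Hom-alternative algebra. Then for each $n \geq 0$, the Hom-algebra $A^n = (A, \alpha^n \circ \mu, \alpha^{n+1})$ is a multiplicative right Hom-alternative algebra. -/
theorem stmt5 {K : Type*} [Field K] [CharZero K] {A : Type*} [AddCommGroup A] [Module K A]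
    (mul : A →ₗ[K] A →ₗ[K] A) (α : A →ₗ[K] A)
    (hα : ∀ x y : A, α (mul x y) = mul (α x) (α y))
    (hra : ∀ x y : A, mul (mul x y) (α y) = mul (α x) (mul y y)) :
    ∀ n : ℕ,
      (∀ x y : A, (⇑α)^[n+1] ((⇑α)^[n] (mul x y)) =
        (⇑α)^[n] (mul ((⇑α)^[n+1] x) ((⇑α)^[n+1] y))) ∧
      (∀ x y : A,
        (⇑α)^[n] (mul ((⇑α)^[n] (mul x y)) ((⇑α)^[n+1] y)) =
        (⇑α)^[n] (mul ((⇑α)^[n+1] x) ((⇑α)^[n] (mul y y)))) := by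
  have hmul : ∀ (n : ℕ) (x y : A), (⇑α)^[n] (mul x y) = mul ((⇑α)^[n] x) ((⇑α)^[n] y) := by
    intro n
    induction n with
    | zero => intro x y; simp
    | succ k ih =>
      intro x y
      rw [Function.iterate_succ_apply', Function.iterate_succ_apply',
        Function.iterate_succ_apply', ih, hα]
  intro n
  constructor
  · intro x y
    simp only [hmul, ← Function.iterate_add_apply]
    rw [show n + 1 + n = n + (n + 1) from by omega]
  · intro x y
    simp only [hmul, ← Function.iterate_add_apply]
    rw [show n + (n + 1) = (n + n) + 1 from by omega, Function.iterate_succ_apply',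
      Function.iterate_succ_apply' α (n+n) x, hra]
end

section
/- In a multiplicative right Hom-alternative algebra, $as(\alpha(x), \alpha(y), yz) = as(x,y,z)\,\alpha^2(y)$ for all $x,y,z$. -/
theorem stmt7 {K : Type*} [Field K] [CharZero K] {A : Type*} [AddCommGroup A] [Module K A]
    (mul : A →ₗ[K] A →ₗ[K] A) (α : A →ₗ[K] A)
    (hα : ∀ x y : A, α (mul x y) = mul (α x) (α y))
    (hra : ∀ x y : A, mul (mul x y) (α y) - mul (α x) (mul y y) = 0) :
    ∀ x y z : A,
      mul (mul (α x) (α y)) (α (mul y z)) - mul (α (α x)) (mul (α y) (mul y z)) =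
      mul (mul (mul x y) (α z) - mul (α x) (mul y z)) (α (α y)) := by
  intro x y z
  -- linearized right Hom-alternative identity
  have Hlem : ∀ a b c : A,
      mul (mul a b) (α c) + mul (mul a c) (α b)
        - mul (α a) (mul b c) - mul (α a) (mul c b) = 0 := by
    intro a b c
    have h1 := hra a (b + c)
    have h2 := hra a b
    have h3 := hra a c
    simp only [map_add, LinearMap.add_apply] at h1
    linear_combination (norm := module) h1 - h2 - h3
  have e1 := Hlem (mul x y) (α z) (α y)
  have e2 := Hlem (α x) (α z) (mul y y)
  have e3 := Hlem (mul x z) (α y) (α y)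
  have e4 := Hlem (α x) (α y) (mul z y)
  have e5 := Hlem (α x) (α y) (mul y z)
  have e6 : mul (α (α x)) (mul (mul z y) (α y) - mul (α z) (mul y y)) = 0 := by
    rw [hra z y, map_zero]
  have e7 : mul (mul (mul x y) (α y) - mul (α x) (mul y y)) (α (α z)) = 0 := by
    rw [hra x y]
    simp
  have e8 : mul (α (α x))
      (mul (mul y y) (α z) + mul (mul y z) (α y)
        - mul (α y) (mul y z) - mul (α y) (mul z y)) = 0 := by
    rw [Hlem y y z, map_zero]
  have e9 : mul
      (mul (mul x y) (α z) + mul (mul x z) (α y)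
        - mul (α x) (mul y z) - mul (α x) (mul z y)) (α (α y)) = 0 := by
    rw [Hlem x y z]
    simp
  simp only [hα, map_add, map_sub, LinearMap.add_apply, LinearMap.sub_apply]
    at e1 e2 e3 e4 e5 e6 e7 e8 e9 ⊢
  linear_combination (norm := module) (1/2 : K) • e2 + (1/4 : K) • e3 + (1/2 : K) • e5
    + (1/2 : K) • e7 + (1/2 : K) • e8 - (1/2 : K) • e1 - (1/2 : K) • e4
    - (1/2 : K) • e6 - (1/2 : K) • e9
end

section
/- In a multiplicative right Hom-alternative algebra, $as(\alpha(x), \alpha(w), yz) + as(\alpha(x), \alpha(y), wz) = as(x,w,z)\,\alpha^2(y) + as(x,y,z)\,\alpha^2(w)$ for all $w,x,y,z$. -/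
theorem stmt8 {K : Type*} [Field K] [CharZero K] {A : Type*} [AddCommGroup A] [Module K A]
    (mul : A →ₗ[K] A →ₗ[K] A) (α : A →ₗ[K] A)
    (hα : ∀ x y : A, α (mul x y) = mul (α x) (α y))
    (hra : ∀ x y : A, mul (mul x y) (α y) - mul (α x) (mul y y) = 0) :
    ∀ w x y z : A,
      (mul (mul (α x) (α w)) (α (mul y z)) - mul (α (α x)) (mul (α w) (mul y z)))
      + (mul (mul (α x) (α y)) (α (mul w z)) - mul (α (α x)) (mul (α y) (mul w z))) =
      mul (mul (mul x w) (α z) - mul (α x) (mul w z)) (α (α y))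
      + mul (mul (mul x y) (α z) - mul (α x) (mul y z)) (α (α w)) := by
  have hL : ∀ a b c : A, mul (mul a b) (α c) - mul (α a) (mul b c)
      + (mul (mul a c) (α b) - mul (α a) (mul c b)) = 0 := by
    intro a b c
    have h := hra a (b + c)
    have h1 := hra a b
    have h2 := hra a c
    simp only [map_add, LinearMap.add_apply] at h
    linear_combination (norm := module) h - h1 - h2
  intro w x y z
  have i1 := hL (α x) (mul w y) (α z)
  have i2 := hL (α x) (mul w z) (α y)
  have i3 := hL (mul x w) (α y) (α z)
  have i4 := hL (mul x y) (α w) (α z)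
  have i5 := hL (mul x z) (α w) (α y)
  have i6 := hL (α x) (mul y w) (α z)
  have i7 := hL (α x) (mul y z) (α w)
  have i8 := hL (α x) (mul z w) (α y)
  have i9 := hL (α x) (mul z y) (α w)
  have c10 := congrArg (fun t => mul t (α (α w))) (hL x y z)
  have b11 := congrArg (mul (α (α x))) (hL w y z)
  have b12 := congrArg (mul (α (α x))) (hL y w z)
  have b13 := congrArg (mul (α (α x))) (hL z w y)
  have c14 := congrArg (fun t => mul t (α (α y))) (hL x w z)
  have c15 := congrArg (fun t => mul t (α (α z))) (hL x w y)
  simp only [hα, map_add, map_sub, map_zero, LinearMap.add_apply, LinearMap.sub_apply,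
    LinearMap.zero_apply] at i1 i2 i3 i4 i5 i6 i7 i8 i9 c10 b11 b12 b13 c14 c15 ⊢
  linear_combination (norm := module) ((2:K)⁻¹) •
    (i1 + i2 - i3 - i4 + i5 + i6 + i7 - i8 - i9 - c10 + b11 + b12 - b13 - c14 + c15)
end

section
/- In a multiplicative right Hom-alternative algebra, $as(wx, \alpha(y), \alpha(z)) + as(\alpha(w), \alpha(x), yz - zy) = \alpha^2(w)\,as(x,y,z) + as(w,y,z)\,\alpha^2(x)$ for all $w,x,y,z$. -/
theorem stmt9 {K : Type*} [Field K] [CharZero K] {A : Type*} [AddCommGroup A] [Module K A]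
    (mul : A →ₗ[K] A →ₗ[K] A) (α : A →ₗ[K] A)
    (hα : ∀ x y : A, α (mul x y) = mul (α x) (α y))
    (hra : ∀ x y : A, mul (mul x y) (α y) - mul (α x) (mul y y) = 0) :
    ∀ w x y z : A,
      (mul (mul (mul w x) (α y)) (α (α z)) - mul (α (mul w x)) (mul (α y) (α z)))
      + (mul (mul (α w) (α x)) (α (mul y z - mul z y))
          - mul (α (α w)) (mul (α x) (mul y z - mul z y))) =
      mul (α (α w)) (mul (mul x y) (α z) - mul (α x) (mul y z))
      + mul (mul (mul w y) (α z) - mul (α w) (mul y z)) (α (α x)) := by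
  intro w x y z
  have hP : ∀ a b c : A, mul (mul a b) (α c) + mul (mul a c) (α b)
      - mul (α a) (mul b c) - mul (α a) (mul c b) = 0 := by
    intro a b c
    have h := hra a (b + c)
    have hb := hra a b
    have hc := hra a c
    simp only [map_add, LinearMap.add_apply] at h
    linear_combination (norm := module) h - hb - hc
  have hPL : ∀ d a b c : A, mul d (mul (mul a b) (α c)) + mul d (mul (mul a c) (α b))
      - mul d (mul (α a) (mul b c)) - mul d (mul (α a) (mul c b)) = 0 := by
    intro d a b c
    have h := congrArg (mul d) (hP a b c)
    simpa only [map_add, map_sub, map_zero] using h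
  have hPR : ∀ d a b c : A, mul (mul (mul a b) (α c)) d + mul (mul (mul a c) (α b)) d
      - mul (mul (α a) (mul b c)) d - mul (mul (α a) (mul c b)) d = 0 := by
    intro d a b c
    have h := congrArg (fun t => mul t d) (hP a b c)
    simpa only [map_add, map_sub, map_zero, LinearMap.add_apply, LinearMap.sub_apply,
      LinearMap.zero_apply] using h
  have e1 := hP (mul w x) (α y) (α z)
  have e2 := hP (mul w y) (α x) (α z)
  have e3 := hP (mul w z) (α x) (α y)
  have e4 := hP (α w) (mul x y) (α z)
  have e5 := hP (α w) (mul x z) (α y)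
  have e6 := hP (α w) (mul y x) (α z)
  have e7 := hP (α w) (mul y z) (α x)
  have e8 := hP (α w) (mul z x) (α y)
  have e9 := hP (α w) (mul z y) (α x)
  have f1 := hPR (α (α z)) w x y
  have f2 := hPR (α (α y)) w x z
  have f3 := hPR (α (α x)) w y z
  have g1 := hPL (α (α w)) x y z
  have g2 := hPL (α (α w)) y x z
  have g3 := hPL (α (α w)) z x y
  simp only [hα, map_sub, LinearMap.sub_apply] at e1 e2 e3 e4 e5 e6 e7 e8 e9 ⊢
  linear_combination (norm := module)
    (1/2 : K) • e1 - (1/2 : K) • e2 + (1/2 : K) • e3 + (1/2 : K) • e4 - (1/2 : K) • e5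
    + (1/2 : K) • e6 + (1/2 : K) • e7 - (1/2 : K) • e8 - (1/2 : K) • e9
    + (1/2 : K) • f1 - (1/2 : K) • f2 - (1/2 : K) • f3
    - (1/2 : K) • g1 + (1/2 : K) • g2 - (1/2 : K) • g3
end

section
/- In a multiplicative right Hom-alternative algebra, $as(\alpha(x), y^2, \alpha(z)) = as(\alpha(x), \alpha(y), yz + zy)$ for all $x,y,z$, where $y^2 = yy$. -/
theorem stmt10 {K : Type*} [Field K] [CharZero K] {A : Type*} [AddCommGroup A] [Module K A]
    (mul : A →ₗ[K] A →ₗ[K] A) (α : A →ₗ[K] A)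
    (hα : ∀ x y : A, α (mul x y) = mul (α x) (α y))
    (hra : ∀ x y : A, mul (mul x y) (α y) - mul (α x) (mul y y) = 0) :
    ∀ x y z : A,
      mul (mul (α x) (mul y y)) (α (α z)) - mul (α (α x)) (mul (mul y y) (α z)) =
      mul (mul (α x) (α y)) (α (mul y z + mul z y))
        - mul (α (α x)) (mul (α y) (mul y z + mul z y)) := by
  have star : ∀ a b c : A, mul (mul a b) (α c) + mul (mul a c) (α b)
      = mul (α a) (mul b c) + mul (α a) (mul c b) := by
    intro a b c
    have h := hra a (b + c)
    simp only [map_add, LinearMap.add_apply] at h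
    linear_combination (norm := module) h - hra a b - hra a c
  intro x y z
  have hra' : ∀ a b : A, mul (mul a b) (α b) = mul (α a) (mul b b) := by
    intro a b
    have h := hra a b
    linear_combination (norm := module) h
  -- instances
  have e1 := star (α x) (mul y y) (α z)
  have e2 := star (α x) (α y) (mul y z)
  have e3 := star (α x) (α y) (mul z y)
  have e4 := congrArg (fun t => mul (α (α x)) t) (star y y z)
  have e5 := congrArg (fun t => mul (α (α x)) t) (hra' z y)
  have e6 := congrArg (fun t => mul t (α (α y))) (star x y z)
  have e7 := hra' (mul x z) (α y)
  have e8 := star (mul x y) (α z) (α y)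
  have e9 := congrArg (fun t => mul t (α (α z))) (hra' x y)
  simp only [map_add, LinearMap.add_apply, hα] at e1 e2 e3 e4 e5 e6 e7 e8 e9 ⊢
  have key : (2 : K) • (mul (mul (α x) (mul y y)) (α (α z)) - mul (α (α x)) (mul (mul y y) (α z))
      - (mul (mul (α x) (α y)) (mul (α y) (α z)) + mul (mul (α x) (α y)) (mul (α z) (α y))
        - (mul (α (α x)) (mul (α y) (mul y z)) + mul (α (α x)) (mul (α y) (mul z y))))) = 0 := by
    linear_combination (norm := module) e1 - e2 - e3 - e4 - e5 - e6 + e7 + e8 - e9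
  have h2 : (2 : K) ≠ 0 := two_ne_zero
  have := smul_eq_zero.mp key
  rcases this with h | h
  · exact absurd h h2
  · linear_combination (norm := module) h
end

section
/- In a multiplicative right Hom-alternative algebra, the Hom-Moufang identity $((xy)\alpha(z))\alpha^2(y) = \alpha^2(x)((yz)\alpha(y))$ holds for all $x,y,z$. -/
theorem stmt11 {K : Type*} [Field K] [CharZero K] {A : Type*} [AddCommGroup A] [Module K A]
    (mul : A →ₗ[K] A →ₗ[K] A) (α : A →ₗ[K] A)
    (hα : ∀ x y : A, α (mul x y) = mul (α x) (α y))
    (hra : ∀ x y : A, mul (mul x y) (α y) = mul (α x) (mul y y)) :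
    ∀ x y z : A,
      mul (mul (mul x y) (α z)) (α (α y)) = mul (α (α x)) (mul (mul y z) (α y)) := by
  intro x y z
  -- the Hom-associator
  set As : A → A → A → A :=
    fun a b c => mul (mul a b) (α c) - mul (α a) (mul b c) with hAs
  -- right alternativity: associator vanishes on equal last two slots
  have alt0 : ∀ a b : A, As a b b = 0 := by
    intro a b
    simp only [hAs, hra a b, sub_self]
  -- linearized right alternativity
  have alt : ∀ a b c : A, As a b c + As a c b = 0 := by
    intro a b c
    have h := hra a (b + c)
    simp only [map_add, LinearMap.add_apply] at h
    have h1 := hra a b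
    have h2 := hra a c
    simp only [hAs]
    linear_combination (norm := module) h - h1 - h2
  -- Hom-Teichmüller identity
  have teich : ∀ a b c d : A,
      As (mul a b) (α c) (α d) - As (α a) (mul b c) (α d) + As (α a) (α b) (mul c d)
        = mul (α (α a)) (As b c d) + mul (As a b c) (α (α d)) := by
    intro a b c d
    simp only [hAs, map_sub, LinearMap.sub_apply, hα]
    module
  have hE1 := teich x z y y
  have hE2 := teich x y z y
  have hE3 := teich x y y z
  have h0a : As z y y = 0 := alt0 z y
  have h0b : As x y y = 0 := alt0 x y
  have h0c : As (mul x z) (α y) (α y) = 0 := alt0 (mul x z) (α y)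
  have alt1 := alt (α x) (mul y z) (α y)
  have alt2 := alt (α x) (mul z y) (α y)
  have alt3 := alt (mul x y) (α y) (α z)
  have alt4 := alt (α x) (mul y y) (α z)
  have alt5 := alt y z y
  have alt6 := alt x z y
  -- multiplied versions
  have m1 : mul (α (α x)) (As y z y) + mul (α (α x)) (As y y z) = 0 := by
    have := congrArg (fun t => mul (α (α x)) t) alt5
    simpa using this
  have m3 : mul (As x z y) (α (α y)) + mul (As x y z) (α (α y)) = 0 := by
    have := congrArg (fun t => mul t (α (α y))) alt6
    simpa using this
  have m2 : mul (As x y y) (α (α z)) = 0 := by rw [h0b]; simp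
  have m4 : mul (α (α x)) (As z y y) = 0 := by rw [h0a]; simp
  -- expansion of the goal difference
  have hexp : mul (mul (mul x y) (α z)) (α (α y)) =
      mul (α (α x)) (mul (mul y z) (α y))
      + As (mul x y) (α z) (α y) + As (α x) (α y) (mul z y)
      - mul (α (α x)) (As y z y) := by
    simp only [hAs, map_sub, LinearMap.sub_apply, hα]
    module
  rw [hexp]
  linear_combination (norm := module)
    ((2:K)⁻¹) • (hE2 + alt1 - hE3 - m2 - m1 - alt4 + hE1 - h0c + m4 + alt2 + m3 + alt3)
end

section
/- In a multiplicative right Hom-alternative algebra, $(as(x,y,z)\,\alpha^2(y))\,\alpha^3(z) = \alpha(as(x,y,z))\,\alpha^2(zy)$ for all $x,y,z$. -/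
theorem stmt12 {K : Type*} [Field K] [CharZero K] {A : Type*} [AddCommGroup A] [Module K A]
    (mul : A →ₗ[K] A →ₗ[K] A) (α : A →ₗ[K] A)
    (hα : ∀ x y : A, α (mul x y) = mul (α x) (α y))
    (hra : ∀ x y : A, mul (mul x y) (α y) - mul (α x) (mul y y) = 0) :
    ∀ x y z : A,
      mul (mul (mul (mul x y) (α z) - mul (α x) (mul y z)) (α (α y))) (α (α (α z))) =
      mul (α (mul (mul x y) (α z) - mul (α x) (mul y z))) (α (α (mul z y))) := by
  have hlin : ∀ u v w : A, mul (mul u v) (α w) + mul (mul u w) (α v)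
      - mul (α u) (mul v w) - mul (α u) (mul w v) = 0 := by
    intro u v w
    have h1 := hra u (v + w)
    have h2 := hra u v
    have h3 := hra u w
    simp only [map_add, LinearMap.add_apply] at h1
    linear_combination (norm := module) h1 - h2 - h3
  intro x y z
  have H1 := hlin (α (α (x))) (α (α (z))) (mul (α (y)) (mul y z))
  have H2 := hlin (α (α (x))) (α (α (z))) (mul (mul y z) (α (y)))
  have H3 := hlin (α (α (x))) (mul (α (z)) (α (z))) (mul (α (y)) (α (y)))
  have H4 := hlin (α (α (x))) (α (α (y))) (mul (α (z)) (mul y z))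
  have H5 := hlin (α (α (x))) (α (α (y))) (mul (mul z z) (α (y)))
  have H6 := hlin (α (α (x))) (α (α (y))) (mul (α (y)) (mul z z))
  have H7 := hlin (α (α (x))) (α (α (y))) (mul (mul y z) (α (z)))
  have H8 := hlin (α (α (x))) (mul (α (z)) (α (y))) (mul (α (y)) (α (z)))
  have H9 := hlin (mul (α (x)) (α (z))) (α (α (y))) (mul (α (y)) (α (z)))
  have H10 := hlin (mul (α (x)) (mul z z)) (α (α (y))) (α (α (y)))
  have H11 := hlin (mul (α (x)) (α (y))) (α (α (z))) (mul (α (y)) (α (z)))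
  have H12 := hlin (mul (α (x)) (α (y))) (mul (α (z)) (α (z))) (α (α (y)))
  have H13 := hlin (mul (α (x)) (mul y z)) (α (α (z))) (α (α (y)))
  have H14 := hlin (mul (mul x y) (α (z))) (α (α (z))) (α (α (y)))
  have H15 := congrArg (fun t => mul t (α (α (α (z))))) (hlin (α (x)) (α (y)) (mul y z))
  have H16 := congrArg (fun t => mul t (mul (α (α (z))) (α (α (z))))) (hlin (α (x)) (α (y)) (α (y)))
  have H17 := congrArg (fun t => mul t (α (α (α (y))))) (hlin (α (x)) (α (z)) (mul y z))
  have H18 := congrArg (fun t => mul t (α (α (α (y))))) (hlin (α (x)) (mul z z) (α (y)))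
  have H19 := congrArg (fun t => mul t (α (α (α (y))))) (hlin (mul x y) (α (z)) (α (z)))
  have H20 := congrArg (fun t => mul t (mul (α (α (y))) (α (α (z))))) (hlin (α (x)) (α (z)) (α (y)))
  have H21 := congrArg (fun t => mul (α (α (α (x)))) t) (hlin (α (z)) (α (y)) (mul y z))
  have H22 := congrArg (fun t => mul (α (α (α (x)))) t) (hlin (mul z z) (α (y)) (α (y)))
  have H23 := congrArg (fun t => mul (α (α (α (x)))) t) (hlin (α (y)) (α (z)) (mul y z))
  have H24 := congrArg (fun t => mul (α (α (α (x)))) t) (hlin (α (y)) (mul z z) (α (y)))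
  have H25 := congrArg (fun t => mul (α (α (α (x)))) t) (hlin (mul y z) (α (z)) (α (y)))
  have H26 := congrArg (fun t => mul (α (α (α (x)))) (mul t (α (α (y))))) (hlin y z z)
  simp only [hα, map_add, map_sub, map_zero, LinearMap.add_apply, LinearMap.sub_apply, LinearMap.zero_apply] at H1 H2 H3 H4 H5 H6 H7 H8 H9 H10 H11 H12 H13 H14 H15 H16 H17 H18 H19 H20 H21 H22 H23 H24 H25 H26 ⊢
  linear_combination (norm := module) ((-1 : K)/2) • H1 + ((-1 : K)/2) • H2 + ((1 : K)/2) • H3 + ((1 : K)/2) • H4 + ((-1 : K)/2) • H5 + ((-1 : K)/2) • H6 + ((1 : K)/2) • H7 + ((1 : K)/2) • H8 + ((-1 : K)/2) • H9 + ((1 : K)/4) • H10 + ((1 : K)/2) • H11 + ((-1 : K)/2) • H12 + ((-1 : K)/2) • H13 + ((1 : K)) • H14 + ((-1 : K)/2) • H15 + ((1 : K)/4) • H16 + ((1 : K)/2) • H17 + ((-1 : K)/2) • H18 + ((-1 : K)/2) • H19 + ((1 : K)/2) • H20 + ((1 : K)/2) • H21 + ((-1 : K)/4) • H22 + ((-1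 : K)/2) • H23 + ((1 : K)/2) • H24 + ((-1 : K)/2) • H25 + ((1 : K)/2) • H26
end

section
/- Every multiplicative right Hom-alternative algebra is Hom-Jordan admissible: for the Jordan product $x * y = \frac{1}{2}(xy + yx)$, the identity $(\alpha(x) * \alpha(y)) * \alpha(x^2) = \alpha^2(x) * (\alpha(y) * x^2)$ holds for all $x,y$, where $x^2 = xx$. -/
def jmul {K : Type*} [Field K] {A : Type*} [AddCommGroup A] [Module K A]
    (mul : A →ₗ[K] A →ₗ[K] A) (a b : A) : A :=
  ((2 : K)⁻¹) • (mul a b + mul b a)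

theorem stmt13 {K : Type*} [Field K] [CharZero K] {A : Type*} [AddCommGroup A] [Module K A]
    (mul : A →ₗ[K] A →ₗ[K] A) (α : A →ₗ[K] A)
    (hα : ∀ x y : A, α (mul x y) = mul (α x) (α y))
    (hra : ∀ x y : A, mul (mul x y) (α y) = mul (α x) (mul y y)) :
    ∀ x y : A,
      jmul mul (jmul mul (α x) (α y)) (α (mul x x)) =
      jmul mul (α (α x)) (jmul mul (α y) (mul x x)) := by
  intro x y
  have hR : ∀ u v w : A, mul (mul u v) (α w) + mul (mul u w) (α v) =
      mul (α u) (mul v w) + mul (α u) (mul w v) := by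
    intro u v w
    have h := hra u (v + w)
    have hv := hra u v
    have hw := hra u w
    simp only [map_add, LinearMap.add_apply] at h
    linear_combination (norm := module) h - hv - hw
  have h1 := congrArg (fun t => mul t (α (α y))) (hR x x x)
  have h2 := hR (α x) (α y) (mul x x)
  have h3 := congrArg (fun t => mul t (α (α x))) (hR y x x)
  have h4 := hR (mul x x) (α x) (α y)
  have h5 := hR (mul y x) (α x) (α x)
  simp only [hα, map_add, LinearMap.add_apply] at h1 h2 h3 h4 h5
  simp only [jmul, hα, map_add, map_smul, LinearMap.add_apply, LinearMap.smul_apply]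
  linear_combination (norm := module) ((8:K)⁻¹) • h1 + ((4:K)⁻¹) • h2 +
    ((8:K)⁻¹) • h3 - ((4:K)⁻¹) • h4 - ((8:K)⁻¹) • h5
end

section
/- Every multiplicative right Hom-alternative algebra is Hom-power associative: for the Hom-powers defined by $x^1 = x$ and $x^n = x^{n-1}\alpha^{n-2}(x)$, one has $x^n = \alpha^{i-1}(x^{n-i})\,\alpha^{n-i-1}(x^i)$ for all $x \in A$, all $n \geq 2$, and all $1 \leq i \leq n-1$. -/
/-!
Induct on the right-hand exponent with the left one arbitrary. The linearized right
Hom-alternative law `(yb)α(c) + (yc)α(b) = α(y)(bc) + α(y)(cb)`, applied to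
`y = α^b(x^{a+1})`, `b = α^{a+b}(x)`, `c = α^a(x^{b+1})`, has each of its four terms identified
by the induction hypothesis: both terms on the left equal `x^{a+b+3}`, both on the right equal
`α^{b+1}(x^{a+1}) α^a(x^{b+2})`. Cancelling the factor 2 needs characteristic `≠ 2`.
-/

def homPow {A : Type*} (mul : A → A → A) (α : A → A) (x : A) : ℕ → A
  | 0 => x
  | n + 1 => mul (homPow mul α x n) (α^[n] x)

open Function

section HomAlternative

variable {R A : Type*} [CommRing R] [AddCommGroup A] [Module R A]
  (mul : A →ₗ[R] A →ₗ[R] A) (α : A →ₗ[R] A)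

lemma iterate_map_mul_of_map_mul (hα : ∀ x y : A, α (mul x y) = mul (α x) (α y)) (e : ℕ)
    (u v : A) : α^[e] (mul u v) = mul (α^[e] u) (α^[e] v) := by
  induction e with
  | zero => rfl
  | succ e ih => simp only [iterate_succ_apply', ih, hα]

lemma right_hom_alternative_linearized
    (hra : ∀ x y : A, mul (mul x y) (α y) = mul (α x) (mul y y)) (y b c : A) :
    mul (mul y b) (α c) + mul (mul y c) (α b) = mul (α y) (mul b c) + mul (α y) (mul c b) := by
  have h := hra y (b + c)
  simp only [map_add, LinearMap.add_apply] at h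
  linear_combination (norm := module) h - hra y b - hra y c

/-- `homPow … x n` is the Hom-power `x ^ (n + 1)`, so this reads
`x ^ (a + b + 2) = α^b (x ^ (a + 1)) * α^a (x ^ (b + 1))`. -/
theorem homPow_add_add_one [IsAddTorsionFree A]
    (hα : ∀ x y : A, α (mul x y) = mul (α x) (α y))
    (hra : ∀ x y : A, mul (mul x y) (α y) = mul (α x) (mul y y)) (x : A) (a b : ℕ) :
    homPow (fun u v => mul u v) α x (a + b + 1) =
      mul (α^[b] (homPow (fun u v => mul u v) α x a))
        (α^[a] (homPow (fun u v => mul u v) α x b)) := by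
  set p := homPow (fun u v => mul u v) α x
  have hmul := iterate_map_mul_of_map_mul mul α hα
  induction b generalizing a with
  | zero => rfl
  | succ b ih =>
    have left_succ : mul (α^[b] x) (p b) = p (b + 1) := by simpa [p, homPow] using (ih 0).symm
    set y := α^[b] (p a)
    set B := α^[a + b] x
    set C := α^[a] (p b)
    have hyB : mul y B = α^[b] (p (a + 1)) := by
      rw [show B = α^[b] (α^[a] x) by rw [← iterate_add_apply, add_comm], ← hmul]; rfl
    have hBC : mul B C = α^[a] (p (b + 1)) := by
      rw [show B = α^[a] (α^[b] x) from iterate_add_apply .., ← hmul, left_succ]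
    have hCB : mul C B = α^[a] (p (b + 1)) := by
      rw [show B = α^[a] (α^[b] x) from iterate_add_apply .., ← hmul]; rfl
    have hyBC : mul (mul y B) (α C) = p (a + (b + 1) + 1) := by
      rw [hyB, ← iterate_succ_apply' α a, ← ih (a + 1), add_right_comm a 1 b]
      rfl
    have hyCB : mul (mul y C) (α B) = p (a + (b + 1) + 1) := by
      rw [← ih a, ← iterate_succ_apply' (⇑α) (a + b) x]; rfl
    have two_eq :
        2 • p (a + (b + 1) + 1) = 2 • mul (α (α^[b] (p a))) (α^[a] (p (b + 1))) := by
      calc 2 • p (a + (b + 1) + 1)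
          = mul (mul y B) (α C) + mul (mul y C) (α B) := by rw [two_nsmul, hyBC, hyCB]
        _ = mul (α y) (mul B C) + mul (α y) (mul C B) :=
            right_hom_alternative_linearized mul α hra y B C
        _ = _ := by rw [hBC, hCB, two_nsmul]
    rw [nsmul_right_injective two_ne_zero two_eq, iterate_succ_apply']

end HomAlternative

theorem stmt15 {K : Type*} [Field K] [CharZero K] {A : Type*} [AddCommGroup A] [Module K A]
    (mul : A →ₗ[K] A →ₗ[K] A) (α : A →ₗ[K] A)
    (hα : ∀ x y : A, α (mul x y) = mul (α x) (α y))
    (hra : ∀ x y : A, mul (mul x y) (α y) = mul (α x) (mul y y)) :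
    ∀ (x : A) (n i : ℕ), 2 ≤ n → 1 ≤ i → i ≤ n - 1 →
      homPow (fun a b => mul a b) (⇑α) x (n - 1) =
        mul ((⇑α)^[i - 1] (homPow (fun a b => mul a b) (⇑α) x (n - i - 1)))
            ((⇑α)^[n - i - 1] (homPow (fun a b => mul a b) (⇑α) x (i - 1))) := by
  intro x n i _ hi hin
  have : IsAddTorsionFree A := .of_isTorsionFree K A
  have h := homPow_add_add_one mul α hα hra x (n - i - 1) (i - 1)
  rwa [show n - i - 1 + (i - 1) + 1 = n - 1 by omega] at h
end

section
/- Let $(A,\mu,\alpha)$ be a multiplicative right Hom-alternative algebra with $\alpha$ surjective, and let $e \in A$ satisfy $e^2 = e = \alpha(e)$. Then $A = A_e(\alpha) + A_e(0)$, where $A_e(\alpha) = \{a : ae = \alpha(a)\}$ and $A_e(0) = \{a : ae = 0\}$ are $\alpha$-invariant subspaces. If $\alpha$ is also injective, the sum is direct. -/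
theorem stmt16 {K : Type*} [Field K] [CharZero K] {A : Type*} [AddCommGroup A] [Module K A]
    (mul : A →ₗ[K] A →ₗ[K] A) (α : A →ₗ[K] A)
    (hα : ∀ x y : A, α (mul x y) = mul (α x) (α y))
    (hra : ∀ x y : A, mul (mul x y) (α y) = mul (α x) (mul y y))
    (hsurj : Function.Surjective α)
    (e : A) (he : mul e e = e) (hae : α e = e) :
    (∀ a : A, mul a e = α a → mul (α a) e = α (α a)) ∧
    (∀ a : A, mul a e = 0 → mul (α a) e = 0) ∧
    (∀ b : A, ∃ a₁ a₀ : A, mul a₁ e = α a₁ ∧ mul a₀ e = 0 ∧ b = a₁ + a₀) ∧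
    (Function.Injective α →
      ∀ a : A, mul a e = α a → mul a e = 0 → a = 0) := by
  have key : ∀ x : A, mul (mul x e) e = mul (α x) e := by
    intro x
    have := hra x e
    rwa [hae, he] at this
  refine ⟨?_, ?_, ?_, ?_⟩
  · intro a ha
    rw [← hae, ← hα, ha]
  · intro a ha
    rw [← hae, ← hα, ha, map_zero]
  · intro b
    obtain ⟨c, hc⟩ := hsurj b
    refine ⟨mul c e, b - mul c e, ?_, ?_, by abel⟩
    · rw [key, hα, hae, hc]
    · rw [map_sub, LinearMap.sub_apply, key, hc, sub_self]
  · intro hinj a h1 h0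
    apply hinj
    rw [← h1, h0, map_zero]
end

section
/- Let $(A,\mu,\alpha)$ be a right Hom-alternative algebra and $e$ an idempotent ($e^2 = e = \alpha(e)$). Then the right multiplication operator $R_e$ (given by $a \mapsto ae$) satisfies $R_e^{n+1} = \alpha^n \circ R_e$ as linear operators, for all $n \geq 0$; in particular $R_e^2 = \alpha R_e$. -/
theorem stmt17 {K : Type*} [Field K] [CharZero K] {A : Type*} [AddCommGroup A] [Module K A]
    (mul : A →ₗ[K] A →ₗ[K] A) (α : Module.End K A)
    (hra : ∀ x y : A, mul (mul x y) (α y) = mul (α x) (mul y y))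
    (e : A) (he : mul e e = e) (hae : α e = e)
    (R : Module.End K A) (hR : ∀ a : A, R a = mul a e) :
    ∀ n : ℕ, R ^ (n + 1) = R * α ^ n := by
  have key : R * R = R * α := by
    ext a
    have h := hra a e
    rw [hae, he] at h
    simp [Module.End.mul_apply, hR, h]
  intro n
  induction n with
  | zero => simp
  | succ n ih =>
    rw [pow_succ', ih, ← mul_assoc, key, mul_assoc, ← pow_succ']
end

section
/- Let $(A,\mu,\alpha)$ be a multiplicative right Hom-alternative algebra and $e$ an idempotent ($e^2=e=\alpha(e)$). Writing $L$ and $R$ for the left and right multiplication operators by $e$ (acting from the right), one has $(L^2 - \alpha L)^2 = 0$ and $(LR - RL)^2 = 0$ as linear operators on $A$. -/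
theorem stmt18 {K : Type*} [Field K] [CharZero K] {A : Type*} [AddCommGroup A] [Module K A]
    (mul : A →ₗ[K] A →ₗ[K] A) (α : Module.End K A)
    (hα : ∀ x y : A, α (mul x y) = mul (α x) (α y))
    (hra : ∀ x y : A, mul (mul x y) (α y) = mul (α x) (mul y y))
    (e : A) (he : mul e e = e) (hae : α e = e)
    (L R : Module.End K A) (hL : ∀ a : A, L a = mul e a) (hR : ∀ a : A, R a = mul a e) :
    (L * L - L * α) * (L * L - L * α) = 0 ∧
    (R * L - L * R) * (R * L - L * R) = 0 := by
  -- α commutes with L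
  have hcl : α * L = L * α := by
    ext a
    simp only [Module.End.mul_apply, hL, hα, hae]
  -- key operator identity 1 : R² = Rα
  have hE1 : R * R = R * α := by
    ext a
    simp only [Module.End.mul_apply, hR]
    have h := hra a e
    rwa [hae, he] at h
  -- key operator identity 2 : L² = Lα + RL - LR (linearized right Hom-alternativity)
  have hE2 : L * L = L * α + R * L - L * R := by
    ext a
    have h := hra e (e + a)
    have h2 := hra e a
    simp only [map_add, LinearMap.add_apply, hα, hae, he] at h h2
    simp only [Module.End.mul_apply, LinearMap.add_apply, LinearMap.sub_apply, hL, hR]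
    linear_combination (norm := abel) h2 - h
  have z1 : R * R - R * α = 0 := by rw [hE1]; abel
  have z2 : L * L - L * α - R * L + L * R = 0 := by rw [hE2]; abel
  have z3 : α * L - L * α = 0 := by rw [hcl]; abel
  -- certificate identity in the free algebra (verified by noncomm_ring)
  have key : (R*L - L*R)*(R*L - L*R) + (R*L - L*R)*(R*L - L*R) =
      (R*R - R*α)*L*L - 2*(L*(R*R - R*α)*L) + L*L*(R*R - R*α)
      + (L*L - L*α - R*L + L*R)*L*L + 2*((L*L - L*α - R*L + L*R)*L*R)
      - (L*L - L*α - R*L + L*R)*R*L - 2*((L*L - L*α - R*L + L*R)*α*L)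
      - L*(L*L - L*α - R*L + L*R)*R + L*(L*L - L*α - R*L + L*R)*α
      + R*(L*L - L*α - R*L + L*R)*L - L*L*(L*L - L*α - R*L + L*R)
      - L*R*(L*L - L*α - R*L + L*R) + L*α*(L*L - L*α - R*L + L*R)
      + L*(α*L - L*α)*R - L*(α*L - L*α)*α + R*(α*L - L*α)*L
      + 2*(L*L*(α*L - L*α)) - 2*(L*α*(α*L - L*α)) := by
    noncomm_ring
  rw [z1, z2, z3] at key
  simp only [mul_zero, zero_mul, sub_zero, zero_sub, add_zero, zero_add, neg_zero] at key
  -- from X² + X² = 0 conclude X² = 0 (char 0)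
  have X2zero : (R*L - L*R)*(R*L - L*R) = 0 := by
    have h2s : (2:K) • ((R*L - L*R)*(R*L - L*R)) = 0 := by
      rw [two_smul]; exact key
    have h2ne : (2:K) ≠ 0 := two_ne_zero
    calc (R*L - L*R)*(R*L - L*R)
        = (2:K)⁻¹ • ((2:K) • ((R*L - L*R)*(R*L - L*R))) := by
          rw [smul_smul, inv_mul_cancel₀ h2ne, one_smul]
      _ = 0 := by rw [h2s, smul_zero]
  have hX : L * L - L * α = R * L - L * R := by rw [hE2]; abel
  exact ⟨by rw [hX]; exact X2zero, X2zero⟩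
end

section
/- Let $(A,\mu,\alpha)$ be a multiplicative right Hom-alternative algebra, $e$ an idempotent ($e^2=e=\alpha(e)$), $L$ the left multiplication operator by $e$, and $T = 3\alpha^2 L^2 - 2\alpha L^3$. Then $T^{n+1} = \alpha^{4n} T$ for all $n \geq 0$; in particular $T^2 = \alpha^4 T$. Moreover, $T$ commutes with the right multiplication operator $R$ by $e$: $TR = RT$. -/
theorem stmt19 {K : Type*} [Field K] [CharZero K] {A : Type*} [AddCommGroup A] [Module K A]
    (mul : A →ₗ[K] A →ₗ[K] A) (α : Module.End K A)
    (hα : ∀ x y : A, α (mul x y) = mul (α x) (α y))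
    (hra : ∀ x y : A, mul (mul x y) (α y) = mul (α x) (mul y y))
    (e : A) (he : mul e e = e) (hae : α e = e)
    (L R : Module.End K A) (hL : ∀ a : A, L a = mul e a) (hR : ∀ a : A, R a = mul a e)
    (T : Module.End K A) (hT : T = 3 • (L ^ 2 * α ^ 2) - 2 • (L ^ 3 * α)) :
    (∀ n : ℕ, T ^ (n + 1) = T * α ^ (4 * n)) ∧
    T ^ 2 = T * α ^ 4 ∧
    R * T = T * R := by
  -- linearized right Hom-alternativity
  have hlin : ∀ x y z : A, mul (mul x y) (α z) + mul (mul x z) (α y) =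
      mul (α x) (mul y z) + mul (α x) (mul z y) := by
    intro x y z
    have h := hra x (y + z)
    simp only [map_add, LinearMap.add_apply] at h
    rw [hra x y, hra x z] at h
    linear_combination (norm := module) h
  have c1 : α * L = L * α := LinearMap.ext fun a => by
    simp only [Module.End.mul_apply, hL, hα, hae]
  have c2 : α * R = R * α := LinearMap.ext fun a => by
    simp only [Module.End.mul_apply, hR, hα, hae]
  have hA : R * L = L * L + L * R - L * α := LinearMap.ext fun a => by
    simp only [Module.End.mul_apply, LinearMap.add_apply, LinearMap.sub_apply, hL, hR]
    have h := hlin e a e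
    simp only [hα, hae, he] at h
    linear_combination (norm := module) h
  have hE : (L * α - L * L) * R + R * (L * α - L * L) = (L * α - L * L) * α :=
    LinearMap.ext fun a => by
      simp only [Module.End.mul_apply, LinearMap.add_apply, LinearMap.sub_apply, hL, hR]
      have h2 := hlin e (mul a e) e
      have h3 := hlin e (α a) e
      have h4 := congrArg (fun u => mul u e) (hlin e a e)
      have h5 := congrArg (fun u => mul e u) (hra a e)
      have h6 := hra (mul e a) e
      simp only [map_add, map_sub, LinearMap.add_apply, LinearMap.sub_apply, hα, hae, he]
        at h2 h3 h4 h5 h6 ⊢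
      linear_combination (norm := module) h2 - h3 + h4 + h5 - h6
  have hNil2 : 2 * (L ^ 4 + L ^ 2 * α ^ 2) = 2 * (2 * (L ^ 3 * α)) := by
    linear_combination (norm := noncomm_ring) - (hE * (L)) + ((L) * c2 * (L)) - ((L*L) * hA) + (hA * (α*L)) - (hA * (L*L)) - 2 * ((L*α) * c1) + 3 * ((L*L) * c1) + 2 * ((L*R) * c1) + ((L) * c1 * (L)) - 2 * ((L) * c1 * (α)) + ((L) * hA * (α)) + ((L) * hE) - ((L*L) * c2)
  have hNil : L ^ 4 + L ^ 2 * α ^ 2 = 2 * (L ^ 3 * α) := by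
    have h2 : (2 : K) • (L ^ 4 + L ^ 2 * α ^ 2) = (2 : K) • (2 * (L ^ 3 * α)) := by
      rw [two_smul, two_smul, ← two_mul, ← two_mul]
      exact hNil2
    exact smul_right_injective (Module.End K A) two_ne_zero h2
  have hT' : T = 3 * (L ^ 2 * α ^ 2) - 2 * (L ^ 3 * α) := by
    rw [hT]; simp only [nsmul_eq_mul, Nat.cast_ofNat]
  have hTsq : T ^ 2 = T * α ^ 4 := by
    rw [hT']
    linear_combination (norm := noncomm_ring) 4 * (hNil * (L*L*α*α)) + 5 * ((L*L*α) * c1 * (L*α*α)) + 2 * ((L*L*L) * c1 * (L*α*α)) + 5 * ((L*L) * c1 * (α*L*α*α)) - 4 * ((L*L*L*L) * c1 * (α*α)) + 5 * ((L*L*L*α) * c1 * (α*α)) - 3 * ((L*L*L) * c1 * (α*α*α)) - 4 * (hNil * (L*α*α*α)) + 4 * ((L*L*α) * c1 * (α*α*α)) + 4 * ((L*L) * c1 * (α*α*α*α)) - 3 * (hNil * (α*α*α*α)) - 6 * ((L*L*α) * c1 * (L*L*α)) + 4 * ((L*L*L) * c1 * (L*L*α)) - 6 * ((L*L) * c1 *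 (α*L*L*α)) + 4 * ((L*L*L*L) * c1 * (L*α)) - 6 * ((L*L*L*α) * c1 * (L*α)) + 4 * ((L*L*L*L*L) * c1 * (α)) - 6 * ((L*L*L) * c1 * (α*L*α)) - 6 * ((L*L*L*L*α) * c1 * (α))
  have hRT : R * T = T * R := by
    rw [hT']
    linear_combination (norm := noncomm_ring) - 6 * (hNil * (α)) + 3 * (hA * (L*α*α)) - 2 * (hA * (L*L*α)) - 3 * ((L*L*α) * c2) + 2 * ((L*L*L) * c2) + 3 * ((L) * hA * (α*α)) - 3 * ((L) * c1 * (α*α)) - 2 * ((L) * hA * (L*α)) + 2 * ((L) * c1 * (L*α)) - 3 * ((L*L) * c2 * (α)) - 2 * ((L*L) * hA * (α)) + 4 * ((L*L) * c1 * (α))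
  have hαT : α * T = T * α := by
    rw [hT']
    linear_combination (norm := noncomm_ring) 3 * (c1 * (L*α*α)) - 2 * (c1 * (L*L*α)) + 3 * ((L) * c1 * (α*α)) - 2 * ((L) * c1 * (L*α)) - 2 * ((L*L) * c1 * (α))
  refine ⟨?_, hTsq, hRT⟩
  intro n
  induction n with
  | zero => simp
  | succ n ih =>
    have hc : α ^ (4 * n) * T = T * α ^ (4 * n) :=
      ((Commute.pow_left (hαT : Commute α T) (4 * n)).eq)
    calc T ^ (n + 1 + 1) = T ^ (n + 1) * T := pow_succ T (n + 1)
      _ = T * α ^ (4 * n) * T := by rw [ih]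
      _ = T * (α ^ (4 * n) * T) := by rw [mul_assoc]
      _ = T * (T * α ^ (4 * n)) := by rw [hc]
      _ = T ^ 2 * α ^ (4 * n) := by rw [← mul_assoc, ← pow_two]
      _ = T * α ^ 4 * α ^ (4 * n) := by rw [hTsq]
      _ = T * α ^ (4 * (n + 1)) := by
        rw [mul_assoc, ← pow_add, show 4 + 4 * n = 4 * (n + 1) from by omega]
end
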